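/- arXiv:2208.06289 — 2 statements merged into one kernel-verified Lean document; each statement's English description precedes it below -/
import Mathlib

section
/- Let H be a group in which every element satisfies h² = 1 (hence H is abelian), and let K be an abelian group. Equip the free abelian group (H × K) →₀ ℤ with the additive involution induced on basis elements by inversion (x ↦ x⁻¹ on H × K), and equip K →₀ ℤ with the additive involution induced by inversion on K. Then the coinvariants of the involution on (H × K) →₀ ℤ are isomorphic, as an abelian group, to the tensor product over ℤ of the free abelian group H →₀ ℤ with the coinvariants of the involution on K →₀ ℤ. -/
/-!
Because every element of `H` is its own inverse, the standard isomorphism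
`(H →₀ ℤ) ⊗ (K →₀ ℤ) ≃ (H × K →₀ ℤ)` conjugates `id ⊗ J` into `I`. Tensoring with a module is
right exact, so the coinvariants of `id ⊗ J` are `(H →₀ ℤ)` tensored with the coinvariants of `J`.
-/

open scoped TensorProduct

namespace LinearMap

variable {R M N : Type*} [CommRing R] [AddCommGroup M] [AddCommGroup N] [Module R M] [Module R N]

def coinvariantsKer (f : M →ₗ[R] M) : Submodule R M := range (id - f)

theorem _root_.AddSubgroup.closure_range_sub_eq_coinvariantsKer (I : M →+ M) :
    AddSubgroup.closure (Set.range fun a => a - I a) =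
      I.toIntLinearMap.coinvariantsKer.toAddSubgroup :=
  le_antisymm (AddSubgroup.closure_le _ |>.2 <| by rintro _ ⟨a, rfl⟩; exact ⟨a, rfl⟩)
    (by rintro _ ⟨a, rfl⟩; exact AddSubgroup.subset_closure ⟨a, rfl⟩)

theorem _root_.LinearEquiv.map_coinvariantsKer (e : M ≃ₗ[R] N) {f : M →ₗ[R] M}
    {g : N →ₗ[R] N} (h : g ∘ₗ e = e ∘ₗ f) :
    f.coinvariantsKer.map (e : M →ₗ[R] N) = g.coinvariantsKer := by
  have hcomm : e ∘ₗ (id - f) = (id - g) ∘ₗ e := by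
    rw [comp_sub, sub_comp, ← h]
    rfl
  rw [coinvariantsKer, coinvariantsKer, ← range_comp, hcomm,
    range_comp_of_range_eq_top _ e.range]

noncomputable def lTensorCoinvariantsEquiv (Q : Type*) [AddCommGroup Q] [Module R Q]
    (f : M →ₗ[R] M) :
    ((Q ⊗[R] M) ⧸ (lTensor Q f).coinvariantsKer) ≃ₗ[R] Q ⊗[R] (M ⧸ f.coinvariantsKer) :=
  Submodule.quotEquivOfEq _ _ (by rw [coinvariantsKer, lTensor_sub, lTensor_id]) ≪≫ₗ
    lTensor.equiv Q (exact_iff.2 (Submodule.ker_mkQ _)) (Submodule.mkQ_surjective _)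

end LinearMap

theorem comp_finsuppTensorFinsupp'_eq {H K : Type*} [Inv H] [Inv K] (hH : ∀ h : H, h⁻¹ = h)
    (I : ((H × K) →₀ ℤ) →+ ((H × K) →₀ ℤ))
    (hI : ∀ x : H × K, I (Finsupp.single x 1) = Finsupp.single x⁻¹ 1)
    (J : (K →₀ ℤ) →+ (K →₀ ℤ))
    (hJ : ∀ k : K, J (Finsupp.single k 1) = Finsupp.single k⁻¹ 1) :
    I.toIntLinearMap ∘ₗ (finsuppTensorFinsupp' ℤ H K).toLinearMap =
      (finsuppTensorFinsupp' ℤ H K).toLinearMap ∘ₗ LinearMap.lTensor (H →₀ ℤ) J.toIntLinearMap := by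
  ext h k
  simp [finsuppTensorFinsupp'_single_tmul_single, hI, hJ, hH]

/-- Let `H` be a group in which every element squares to the identity and let `K` be an
abelian group.  Equip `(H × K) →₀ ℤ` with the additive involution `I` induced by
inversion on `H × K`, and `K →₀ ℤ` with the additive involution `J` induced by inversion
on `K`.  Then the coinvariants of `I` are isomorphic, as an abelian group, to the tensor
product over `ℤ` of the free abelian group `H →₀ ℤ` with the coinvariants of `J`. -/
theorem coinvariants_prod_iso_tensor {H K : Type*} [Group H] [CommGroup K]
    (hH : ∀ h : H, h ^ 2 = 1)
    (I : ((H × K) →₀ ℤ) →+ ((H × K) →₀ ℤ))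
    (hI : ∀ x : H × K, I (Finsupp.single x 1) = Finsupp.single x⁻¹ 1)
    (J : (K →₀ ℤ) →+ (K →₀ ℤ))
    (hJ : ∀ k : K, J (Finsupp.single k 1) = Finsupp.single k⁻¹ 1)
    (C : AddSubgroup ((H × K) →₀ ℤ))
    (hC : C = AddSubgroup.closure (Set.range fun a => a - I a))
    (D : AddSubgroup (K →₀ ℤ))
    (hD : D = AddSubgroup.closure (Set.range fun a => a - J a)) :
    Nonempty ((((H × K) →₀ ℤ) ⧸ C) ≃+ ((H →₀ ℤ) ⊗[ℤ] ((K →₀ ℤ) ⧸ D))) := by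
  have hinv (h : H) : h⁻¹ = h := inv_eq_of_mul_eq_one_right ((sq h).symm.trans (hH h))
  have hmap := (finsuppTensorFinsupp' ℤ H K).map_coinvariantsKer
    (comp_finsuppTensorFinsupp'_eq hinv I hI J hJ)
  rw [AddSubgroup.closure_range_sub_eq_coinvariantsKer] at hC hD
  -- `M ⧸ p.toAddSubgroup` is definitionally `M ⧸ p`, so the two kinds of equivalence compose.
  exact ⟨(QuotientAddGroup.quotientAddEquivOfEq hC).trans
    ((Submodule.Quotient.equiv _ _ _ hmap).symm ≪≫ₗ LinearMap.lTensorCoinvariantsEquiv _ _ ≪≫ₗ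
      LinearEquiv.lTensor _
        (QuotientAddGroup.quotientAddEquivOfEq hD.symm).toIntLinearEquiv).toAddEquiv⟩
end

section
/- Let K be an abelian group with no elements of order 2 (i.e., k² = 1 implies k = 1). Then the coinvariants of the free abelian group K →₀ ℤ under the additive involution induced by inversion (sending the basis element of k to the basis element of k⁻¹) form a torsion-free abelian group. -/
/-!
Inversion permutes the basis of `K →₀ ℤ`, and the coinvariants of a permutation module are free
on the orbits. Concretely, if `r` sends each point to a chosen representative of its orbit
`{k, k⁻¹}`, then the kernel of `mapDomain r` is exactly the subgroup generated by the
`x - J x`, so the coinvariants embed into the torsion-free group `K →₀ ℤ`.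
-/

open Finsupp Function

/-- The orbit `{a, σ a}` is encoded as the unordered pair `s(a, σ a)`, so that `a` and `σ a`
get the same representative when `σ` is an involution. -/
noncomputable def involutionRep {α : Type*} (σ : α → α) (a : α) : α :=
  haveI : Nonempty α := ⟨a⟩
  invFun (fun b => s(b, σ b)) s(a, σ a)

section involutionRep

variable {α : Type*}

lemma involutionRep_eq_or (σ : α → α) (a : α) :
    involutionRep σ a = a ∨ involutionRep σ a = σ a := by
  have : Nonempty α := ⟨a⟩
  have hpair : s(involutionRep σ a, σ (involutionRep σ a)) = s(a, σ a) :=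
    invFun_eq (f := fun b => s(b, σ b)) ⟨a, rfl⟩
  exact Sym2.mem_iff.1 (hpair ▸ Sym2.mem_mk_left _ _)

lemma involutionRep_comp {σ : α → α} (hσ : Involutive σ) : involutionRep σ ∘ σ = involutionRep σ := by
  funext a
  rw [comp_apply, involutionRep, involutionRep, hσ a, Sym2.eq_swap]

end involutionRep

section coinvariants

variable {α M : Type*} [AddCommGroup M] {σ : α → α}

lemma sub_mapDomain_involutionRep_mem_closure (x : α →₀ M) :
    x - mapDomain (involutionRep σ) x ∈
      AddSubgroup.closure (Set.range fun y : α →₀ M => y - mapDomain σ y) := by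
  induction x using Finsupp.induction_linear with
  | zero => simp
  | add x y hx hy => simpa [mapDomain_add, add_sub_add_comm] using add_mem hx hy
  | single a m =>
    rw [mapDomain_single]
    rcases involutionRep_eq_or σ a with h | h <;> rw [h]
    · simp
    · exact AddSubgroup.subset_closure ⟨single a m, by simp only [mapDomain_single]⟩

theorem closure_range_sub_mapDomain_eq_ker (hσ : Involutive σ) :
    AddSubgroup.closure (Set.range fun x : α →₀ M => x - mapDomain σ x) =
      (mapDomain.addMonoidHom (involutionRep σ) : (α →₀ M) →+ (α →₀ M)).ker := by
  apply le_antisymm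
  · rw [AddSubgroup.closure_le]
    rintro _ ⟨x, rfl⟩
    simp [AddMonoidHom.mem_ker, mapDomain_sub, ← mapDomain_comp, involutionRep_comp hσ]
  · intro x (hx : mapDomain (involutionRep σ) x = 0)
    simpa [hx] using sub_mapDomain_involutionRep_mem_closure (σ := σ) x

end coinvariants

instance QuotientAddGroup.isAddTorsionFree_ker {A B : Type*} [AddGroup A] [AddGroup B]
    [IsAddTorsionFree B] (f : A →+ B) : IsAddTorsionFree (A ⧸ f.ker) :=
  (kerLift_injective f).isAddTorsionFree (kerLift f)

theorem coinvariants_torsion_free_of_no_two_torsion_general {K : Type*} [CommGroup K]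
    (J : (K →₀ ℤ) →+ (K →₀ ℤ))
    (hJ : ∀ k : K, J (Finsupp.single k 1) = Finsupp.single k⁻¹ 1)
    (D : AddSubgroup (K →₀ ℤ))
    (hD : D = AddSubgroup.closure (Set.range fun a => a - J a)) :
    ∀ g : (K →₀ ℤ) ⧸ D, g ≠ 0 → ¬IsOfFinAddOrder g := by
  obtain rfl : J = mapDomain.addMonoidHom (·⁻¹) :=
    addHom_ext' fun k => AddMonoidHom.ext_int (by simpa using hJ k)
  obtain rfl : D = (mapDomain.addMonoidHom (involutionRep (·⁻¹))).ker :=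
    hD.trans (closure_range_sub_mapDomain_eq_ker inv_involutive)
  exact fun g => not_isOfFinAddOrder_of_isAddTorsionFree

/-- Let `K` be an abelian group with no elements of order `2`.  Then the coinvariants of
the free abelian group `K →₀ ℤ` under the additive involution induced by inversion on
`K` form a torsion-free abelian group. -/
theorem coinvariants_torsion_free_of_no_two_torsion {K : Type*} [CommGroup K]
    (hK : ∀ k : K, k ^ 2 = 1 → k = 1)
    (J : (K →₀ ℤ) →+ (K →₀ ℤ))
    (hJ : ∀ k : K, J (Finsupp.single k 1) = Finsupp.single k⁻¹ 1)
    (D : AddSubgroup (K →₀ ℤ))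
    (hD : D = AddSubgroup.closure (Set.range fun a => a - J a)) :
    ∀ g : (K →₀ ℤ) ⧸ D, g ≠ 0 → ¬IsOfFinAddOrder g :=
  coinvariants_torsion_free_of_no_two_torsion_general J hJ D hD
end
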